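/- Fix β > 2, m ∈ ℕ and L ≥ 1, and let F̂ : R_{m,13} → R_{m,13} be an L-bi-Lipschitz homeomorphism such that F̂(x₁,x₂,x₃,x₄) = (x₁,x₂,x₃,−x₄) for every x ∈ K_{B,m} ∩ ([−2m−3,2m+3]^3 × [−3,3]). Then there exists M ∈ ℕ, depending only on L and β, such that F̂(x) ∉ 𝒯 for every x ∈ 𝒢, where 𝒢 = R_{m,13} \ ⋃_{n₁,n₂,n₃=−m}^m [ ([−2m−3,2m+3] × U_1^3 + (0,2n₂,2n₃,0)) ∪ (U_1^1 × [−2m−3,2m+3] × U_1^2 + (2n₁,0,2n₃,0)) ∪ (U_1^2 × [−2m−3,2m+3] × U_1^1 + (2n₁,2n₂,0,0)) ∪ (U_1^3 × [−3,3] + (2n₁,2n₂,2n₃,0)) ] and 𝒯 = ⋃_{n₁,n₂,n₃=−m}^m [ ([−2m−2,2m+2] × U_{M+1}^3 + (0,2n₂,2n₃,0)) ∪ (U_{M+1}^1 × [−2m−2,2m+2] × U_{M+1}^2 + (2n₁,0,2n₃,0)) ∪ (U_{M+1}^2 × [−2m−2,2m+2] × U_{M+1}^1 + (2n₁,2n₂,0,0))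 ∪ (U_{M+1}^3 × [−2,2] + (2n₁,2n₂,2n₃,0)) ]. -/

import Mathlib

/-!
If `F̂ x` lies in `𝒯`, then all coordinates of `F̂ x` but a free one `i` lie in `U_{M+1}`
(after translation), hence within `2 r_{M+1}` of points of the Cantor set, so `F̂ x` is
`4 r_{M+1}`-close to a point `w` of `K_{B,m}` on a line parallel to `e_i` with `wᵢ = (F̂ x)ᵢ`.
`K_{B,m}` is symmetric under the reflection `ρ` and `F̂ = ρ` on it, so `F̂ (ρ w) = w`, and the
bi-Lipschitz bound gives `|x - ρ w| ≤ 4 L r_{M+1} = 4 L r_1^{M+1}`. Once `16 L r_1^M < 1` this is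
at most `r_1 / 4`, which keeps the non-free coordinates of `x` inside `U_1` and moves the free one
by less than `1`; so `x` is not in `𝒢`.
-/

noncomputable section
open MeasureTheory Set Filter

/-- `ℝ⁴` as Euclidean space. -/
abbrev E4 : Type := EuclideanSpace ℝ (Fin 4)

/-- The box `R_{m,t} = [-2m-5, 2m+5]³ × [-1-t, 1+t]`. -/
def Rbox (m : ℕ) (t : ℝ) : Set E4 :=
  {x | |x 0| ≤ 2 * (m : ℝ) + 5 ∧ |x 1| ≤ 2 * (m : ℝ) + 5 ∧ |x 2| ≤ 2 * (m : ℝ) + 5 ∧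
    |x 3| ≤ 1 + t}

/-- The sequence `r_k = 2^{-k(β+1)}` defining the thin Cantor-type set `C_B`. -/
def rB (β : ℝ) (k : ℕ) : ℝ := (2 : ℝ) ^ (-(β + 1) * (k : ℝ))

/-- One-dimensional `k`-th generation `U_k^1 ⊆ ℝ` of the Cantor-type construction. -/
def cantorU1 (s : ℕ → ℝ) (k : ℕ) : Set ℝ :=
  ⋃ (w : Fin k → ℝ) (_ : ∀ j, w j = 1 ∨ w j = -1),
    {t | |t - 2⁻¹ * ∑ j : Fin k, s j.1 * w j| < s k}

/-- One-dimensional Cantor-type set `C(1) ⊆ ℝ`. -/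
def cantorTypeSet1 (s : ℕ → ℝ) : Set ℝ :=
  ⋂ (k : ℕ) (_ : 1 ≤ k), cantorU1 s k

/-- The translation vector `(2n₁, 2n₂, 2n₃, 0)`. -/
def tr (n₁ n₂ n₃ : ℤ) : E4 :=
  (2 * (n₁ : ℝ)) • EuclideanSpace.single 0 (1 : ℝ) +
  (2 * (n₂ : ℝ)) • EuclideanSpace.single 1 (1 : ℝ) +
  (2 * (n₃ : ℝ)) • EuclideanSpace.single 2 (1 : ℝ)

/-- `K_{B,m}`: all lines parallel to the coordinate axes through the translated
copies of the Cantor set `C_B(4)`. -/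
def KBm (β : ℝ) (m : ℕ) : Set E4 :=
  {x | ∃ n₁ n₂ n₃ : ℤ, |n₁| ≤ (m : ℤ) ∧ |n₂| ≤ (m : ℤ) ∧ |n₃| ≤ (m : ℤ) ∧
    ∃ (c : E4) (i : Fin 4) (t : ℝ),
      (∀ j, c j ∈ cantorTypeSet1 (rB β)) ∧
      x = c + tr n₁ n₂ n₃ + t • EuclideanSpace.single i (1 : ℝ)}

/-- The reflection `(x₁,x₂,x₃,x₄) ↦ (x₁,x₂,x₃,−x₄)`. -/
def reflect (x : E4) : E4 := x - (2 * x 3) • EuclideanSpace.single 3 (1 : ℝ)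

/-- Membership in the union (over translations `(2n₁,2n₂,2n₃,0)`, `|nᵢ| ≤ m`) of the
four sets `[-b₁,b₁] × U_k³ + (0,2n₂,2n₃,0)`, `U_k¹ × [-b₁,b₁] × U_k² + (2n₁,0,2n₃,0)`,
`U_k² × [-b₁,b₁] × U_k¹ + (2n₁,2n₂,0,0)` and `U_k³ × [-b₄,b₄] + (2n₁,2n₂,2n₃,0)`. -/
def nearLines (β : ℝ) (m k : ℕ) (b₁ b₄ : ℝ) (x : E4) : Prop :=
  ∃ n₁ n₂ n₃ : ℤ, |n₁| ≤ (m : ℤ) ∧ |n₂| ≤ (m : ℤ) ∧ |n₃| ≤ (m : ℤ) ∧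
    ((|x 0| ≤ b₁ ∧ x 1 - 2 * (n₂ : ℝ) ∈ cantorU1 (rB β) k ∧
        x 2 - 2 * (n₃ : ℝ) ∈ cantorU1 (rB β) k ∧ x 3 ∈ cantorU1 (rB β) k) ∨
     (x 0 - 2 * (n₁ : ℝ) ∈ cantorU1 (rB β) k ∧ |x 1| ≤ b₁ ∧
        x 2 - 2 * (n₃ : ℝ) ∈ cantorU1 (rB β) k ∧ x 3 ∈ cantorU1 (rB β) k) ∨
     (x 0 - 2 * (n₁ : ℝ) ∈ cantorU1 (rB β) k ∧ x 1 - 2 * (n₂ : ℝ) ∈ cantorU1 (rB β) k ∧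
        |x 2| ≤ b₁ ∧ x 3 ∈ cantorU1 (rB β) k) ∨
     (x 0 - 2 * (n₁ : ℝ) ∈ cantorU1 (rB β) k ∧ x 1 - 2 * (n₂ : ℝ) ∈ cantorU1 (rB β) k ∧
        x 2 - 2 * (n₃ : ℝ) ∈ cantorU1 (rB β) k ∧ |x 3| ≤ b₄))

section GeometricCantor

variable {q : ℝ}

def cantorPoint (q : ℝ) (v : ℕ → ℝ) : ℝ := 2⁻¹ * ∑' j, q ^ j * v j

lemma abs_cantorPoint_sub_sum_range_le (hq₀ : 0 ≤ q) (hq₁ : q < 1) {v : ℕ → ℝ}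
    (hv : ∀ j, |v j| ≤ 1) (k : ℕ) :
    |cantorPoint q v - 2⁻¹ * ∑ j ∈ Finset.range k, q ^ j * v j| ≤ 2⁻¹ * (q ^ k / (1 - q)) := by
  have hterm : ∀ j, ‖q ^ j * v j‖ ≤ q ^ j := fun j => by
    rw [Real.norm_eq_abs, abs_mul, abs_of_nonneg (by positivity)]
    exact mul_le_of_le_one_right (by positivity) (hv j)
  have hsum : Summable fun j => q ^ j * v j :=
    .of_norm_bounded (summable_geometric_of_lt_one hq₀ hq₁) hterm
  have htail : ‖∑' j, q ^ (j + k) * v (j + k)‖ ≤ q ^ k / (1 - q) := by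
    refine tsum_of_norm_bounded ((hasSum_geometric_of_lt_one hq₀ hq₁).mul_left (q ^ k)) ?_
    intro j
    simpa only [pow_add, mul_comm (q ^ j)] using hterm (j + k)
  rw [cantorPoint, ← hsum.sum_add_tsum_nat_add k, mul_add, add_sub_cancel_left, abs_mul,
    abs_of_pos (by norm_num)]
  exact mul_le_mul_of_nonneg_left htail (by norm_num)

lemma abs_cantorPoint_sub_sum_range_lt (hq₀ : 0 < q) (hq : q < 1/2) {v : ℕ → ℝ}
    (hv : ∀ j, |v j| ≤ 1) (k : ℕ) :
    |cantorPoint q v - 2⁻¹ * ∑ j ∈ Finset.range k, q ^ j * v j| < q ^ k := by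
  refine (abs_cantorPoint_sub_sum_range_le hq₀.le (by linarith) hv k).trans_lt ?_
  have hqk : 0 < q ^ k := by positivity
  rw [← div_eq_inv_mul, div_div, div_lt_iff₀ (by nlinarith)]
  nlinarith

lemma abs_le_one_of_sign {v : ℝ} (hv : v = 1 ∨ v = -1) : |v| ≤ 1 := by
  rcases hv with rfl | rfl <;> norm_num

lemma cantorPoint_mem_cantorTypeSet1 (hq₀ : 0 < q) (hq : q < 1/2) {v : ℕ → ℝ}
    (hv : ∀ j, v j = 1 ∨ v j = -1) : cantorPoint q v ∈ cantorTypeSet1 (q ^ ·) := by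
  refine mem_iInter₂.2 fun k _ => mem_iUnion₂.2 ⟨fun j => v j, fun j => hv j, ?_⟩
  rw [mem_ofPred_eq, Fin.sum_univ_eq_sum_range (fun j => q ^ j * v j)]
  exact abs_cantorPoint_sub_sum_range_lt hq₀ hq (fun j => abs_le_one_of_sign (hv j)) k

lemma cantorTypeSet1_nonempty (hq₀ : 0 < q) (hq : q < 1/2) :
    (cantorTypeSet1 (q ^ ·)).Nonempty :=
  ⟨_, cantorPoint_mem_cantorTypeSet1 hq₀ hq (v := fun _ => 1) fun _ => .inl rfl⟩

lemma exists_mem_cantorTypeSet1_abs_sub_lt (hq₀ : 0 < q) (hq : q < 1/2) {k : ℕ} {p : ℝ}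
    (hp : p ∈ cantorU1 (q ^ ·) k) : ∃ c ∈ cantorTypeSet1 (q ^ ·), |p - c| < 2 * q ^ k := by
  obtain ⟨w, hw, hpw⟩ := mem_iUnion₂.1 hp
  set v : ℕ → ℝ := fun j => if h : j < k then w ⟨j, h⟩ else 1
  have hv : ∀ j, v j = 1 ∨ v j = -1 := fun j => by
    by_cases h : j < k
    · simpa [v, h] using hw ⟨j, h⟩
    · simp [v, h]
  have hwv : ∑ j : Fin k, q ^ j.1 * w j = ∑ j ∈ Finset.range k, q ^ j * v j := by
    rw [← Fin.sum_univ_eq_sum_range (fun j => q ^ j * v j)]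
    simp [v]
  refine ⟨cantorPoint q v, cantorPoint_mem_cantorTypeSet1 hq₀ hq hv, ?_⟩
  have hcv := abs_cantorPoint_sub_sum_range_lt hq₀ hq (fun j => abs_le_one_of_sign (hv j)) k
  rw [← hwv] at hcv
  have hpw' : |p - 2⁻¹ * ∑ j : Fin k, q ^ j.1 * w j| < q ^ k := hpw
  calc |p - cantorPoint q v|
      ≤ |p - 2⁻¹ * ∑ j : Fin k, q ^ j.1 * w j| +
        |cantorPoint q v - 2⁻¹ * ∑ j : Fin k, q ^ j.1 * w j| := by
        rw [abs_sub_comm (cantorPoint q v)]; exact abs_sub_le _ _ _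
    _ < 2 * q ^ k := by linarith

lemma neg_mem_cantorTypeSet1 {s : ℕ → ℝ} {c : ℝ} (hc : c ∈ cantorTypeSet1 s) :
    -c ∈ cantorTypeSet1 s := by
  refine mem_iInter₂.2 fun k hk => ?_
  obtain ⟨w, hw, hcw⟩ := mem_iUnion₂.1 (mem_iInter₂.1 hc k hk)
  refine mem_iUnion₂.2 ⟨fun j => -w j, fun j => by rcases hw j with h | h <;> simp [h], ?_⟩
  have hneg : -c - 2⁻¹ * ∑ j : Fin k, s j * -w j = -(c - 2⁻¹ * ∑ j : Fin k, s j * w j) := by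
    simp only [mul_neg, Finset.sum_neg_distrib]; ring
  rw [mem_ofPred_eq, hneg, abs_neg]
  exact hcw

lemma abs_sub_half_lt_of_mem_cantorTypeSet1 {c : ℝ} (hc : c ∈ cantorTypeSet1 (q ^ ·)) :
    ∃ w : ℝ, (w = 1 ∨ w = -1) ∧ |c - 2⁻¹ * w| < q := by
  obtain ⟨w, hw, hcw⟩ := mem_iUnion₂.1 (mem_iInter₂.1 hc 1 le_rfl)
  exact ⟨w 0, hw 0, by simpa using hcw⟩

lemma abs_le_one_of_mem_cantorTypeSet1 (hq : q ≤ 1/2) {c : ℝ}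
    (hc : c ∈ cantorTypeSet1 (q ^ ·)) : |c| ≤ 1 := by
  obtain ⟨w, hw, hcw⟩ := abs_sub_half_lt_of_mem_cantorTypeSet1 hc
  have := abs_lt.1 hcw
  rw [abs_le]
  rcases hw with rfl | rfl <;> constructor <;> linarith

lemma mem_cantorU1_one_of_abs_sub_le (hq₀ : 0 ≤ q) (hq : q ≤ 1/4) {c x : ℝ}
    (hc : c ∈ cantorTypeSet1 (q ^ ·)) (hxc : |x - c| ≤ q / 4) : x ∈ cantorU1 (q ^ ·) 1 := by
  -- `c ∈ U_2` puts `c` within `q/2 + q²` of the centre `±1/2` of a component of `U_1`.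
  obtain ⟨w, hw, hcw⟩ := mem_iUnion₂.1 (mem_iInter₂.1 hc 2 (by norm_num))
  refine mem_iUnion₂.2 ⟨fun _ => w 0, fun _ => hw 0, ?_⟩
  have hcw' : |c - 2⁻¹ * (w 0 + q * w 1)| < q ^ 2 := by simpa [Fin.sum_univ_two] using hcw
  have hxw : |x - 2⁻¹ * w 0| < q := by
    have := abs_le.1 hxc
    have := abs_lt.1 hcw'
    rw [abs_lt]
    obtain ⟨hw₁, hw₁'⟩ := abs_le.1 (abs_le_one_of_sign (hw 1))
    have := mul_le_mul_of_nonneg_left hw₁ hq₀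
    have := mul_le_mul_of_nonneg_left hw₁' hq₀
    constructor <;> nlinarith
  simpa using hxw

end GeometricCantor

lemma rB_eq_pow (β : ℝ) : rB β = (rB β 1 ^ ·) := by
  funext k
  rw [rB, rB, ← Real.rpow_natCast, ← Real.rpow_mul zero_le_two]
  norm_num

lemma rB_one_pos (β : ℝ) : 0 < rB β 1 := Real.rpow_pos_of_pos two_pos _

lemma rB_one_le_quarter {β : ℝ} (hβ : 1 ≤ β) : rB β 1 ≤ 1/4 := by
  calc rB β 1 ≤ 2 ^ (-2 : ℝ) := by
        rw [rB]; exact Real.rpow_le_rpow_of_exponent_le one_le_two (by push_cast; linarith)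
    _ = 1/4 := by norm_num [Real.rpow_neg, Real.rpow_two]

lemma rB_one_lt_half {β : ℝ} (hβ : 0 < β) : rB β 1 < 1/2 := by
  calc rB β 1 < 2 ^ (-1 : ℝ) := by
        rw [rB]; exact Real.rpow_lt_rpow_of_exponent_lt one_lt_two (by push_cast; linarith)
    _ = 1/2 := by norm_num [Real.rpow_neg]

lemma EuclideanSpace.dist_le_sqrt_card_mul {ι : Type*} [Fintype ι]
    {x y : EuclideanSpace ℝ ι} {r : ℝ} (h : ∀ i, |x i - y i| ≤ r) :
    dist x y ≤ √(Fintype.card ι) * r := by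
  rcases isEmpty_or_nonempty ι with hι | ⟨⟨i₀⟩⟩
  · simp [Subsingleton.elim x y]
  have hr : 0 ≤ r := (abs_nonneg _).trans (h i₀)
  calc dist x y = √(∑ i, dist (x i) (y i) ^ 2) := EuclideanSpace.dist_eq x y
    _ ≤ √(∑ _ : ι, r ^ 2) := by
        gcongr with i
        rw [Real.dist_eq]
        exact h i
    _ = √(Fintype.card ι) * r := by simp [Real.sqrt_mul, Real.sqrt_sq hr]

-- `K_{B,m}` is the union of these sets for `s = r`, `v = (2n₁,2n₂,2n₃,0)` and `i ∈ Fin 4`.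
def OnCantorLine {ι : Type*} (s : ℕ → ℝ) (v : EuclideanSpace ℝ ι) (i : ι)
    (x : EuclideanSpace ℝ ι) : Prop :=
  ∀ j ≠ i, x j - v j ∈ cantorTypeSet1 s

section OnCantorLine

variable {ι : Type*} [Fintype ι] {q : ℝ} {v x : EuclideanSpace ℝ ι} {i : ι}

lemma exists_onCantorLine_dist_le [DecidableEq ι] (hq₀ : 0 < q) (hq : q < 1/2) {k : ℕ}
    {y : EuclideanSpace ℝ ι} (hy : ∀ j ≠ i, y j - v j ∈ cantorU1 (q ^ ·) k) :
    ∃ w, OnCantorLine (q ^ ·) v i w ∧ w i = y i ∧ dist y w ≤ √(Fintype.card ι) * (2 * q ^ k) := by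
  have hc : ∀ j, ∃ c, j ≠ i → c ∈ cantorTypeSet1 (q ^ ·) ∧ |y j - v j - c| < 2 * q ^ k := by
    intro j
    by_cases hj : j = i
    · exact ⟨0, fun h => absurd hj h⟩
    · obtain ⟨c, hc, hyc⟩ := exists_mem_cantorTypeSet1_abs_sub_lt hq₀ hq (hy j hj)
      exact ⟨c, fun _ => ⟨hc, hyc⟩⟩
  choose c hc using hc
  refine ⟨WithLp.toLp 2 fun j => if j = i then y i else c j + v j, fun j hj => ?_, by simp, ?_⟩
  · simpa [hj] using (hc j hj).1
  · refine EuclideanSpace.dist_le_sqrt_card_mul fun j => ?_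
    by_cases hj : j = i
    · subst hj; simp only [↓reduceIte, sub_self, abs_zero]; positivity
    · simpa [hj, sub_sub, add_comm] using (hc j hj).2.le

lemma OnCantorLine.sub_mem_cantorU1_one (hq₀ : 0 ≤ q) (hq : q ≤ 1/4)
    {z : EuclideanSpace ℝ ι} (hz : OnCantorLine (q ^ ·) v i z) (hxz : dist x z ≤ q / 4) :
    ∀ j ≠ i, x j - v j ∈ cantorU1 (q ^ ·) 1 := by
  intro j hj
  refine mem_cantorU1_one_of_abs_sub_le hq₀ hq (hz j hj) ?_
  calc |x j - v j - (z j - v j)| = dist (x j) (z j) := by rw [Real.dist_eq]; ring_nf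
    _ ≤ dist x z := PiLp.dist_apply_le x z j
    _ ≤ q / 4 := hxz

end OnCantorLine

lemma tr_apply (n₁ n₂ n₃ : ℤ) (j : Fin 4) :
    tr n₁ n₂ n₃ j = ![2 * (n₁ : ℝ), 2 * (n₂ : ℝ), 2 * (n₃ : ℝ), 0] j := by
  fin_cases j <;> simp [tr]

lemma abs_tr_apply_le {m : ℕ} {n₁ n₂ n₃ : ℤ} (hn₁ : |n₁| ≤ (m : ℤ)) (hn₂ : |n₂| ≤ (m : ℤ))
    (hn₃ : |n₃| ≤ (m : ℤ)) (j : Fin 4) :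
    |tr n₁ n₂ n₃ j| ≤ ![2 * (m : ℝ), 2 * (m : ℝ), 2 * (m : ℝ), 0] j := by
  have h₁ : |(n₁ : ℝ)| ≤ m := by exact_mod_cast hn₁
  have h₂ : |(n₂ : ℝ)| ≤ m := by exact_mod_cast hn₂
  have h₃ : |(n₃ : ℝ)| ≤ m := by exact_mod_cast hn₃
  fin_cases j <;>
    simp only [tr_apply, Fin.isValue, Fin.zero_eta, Fin.mk_one, Fin.reduceFinMk, Matrix.cons_val,
      Matrix.cons_val_zero, Matrix.cons_val_one, abs_mul, abs_two, abs_zero] <;>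
    linarith

lemma reflect_apply (x : E4) (j : Fin 4) : reflect x j = if j = 3 then -x 3 else x j := by
  simp only [reflect, PiLp.sub_apply, PiLp.smul_apply, PiLp.single_apply, smul_eq_mul]
  split_ifs with h
  · subst h; ring
  · ring

lemma abs_reflect_apply (x : E4) (j : Fin 4) : |reflect x j| = |x j| := by
  rw [reflect_apply]; split_ifs with h <;> simp [h]

lemma reflect_reflect (x : E4) : reflect (reflect x) = x := by
  ext j; simp only [reflect_apply]; split_ifs <;> simp_all

lemma OnCantorLine.reflect {s : ℕ → ℝ} {v x : E4} {i : Fin 4} (hv : v 3 = 0)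
    (hx : OnCantorLine s v i x) : OnCantorLine s v i (reflect x) := by
  intro j hj
  rw [reflect_apply]
  split_ifs with h
  · subst h; simpa [hv] using neg_mem_cantorTypeSet1 (hx 3 hj)
  · exact hx j hj

section KBm

variable {m : ℕ} {n₁ n₂ n₃ : ℤ} {i : Fin 4} {x : E4}

lemma OnCantorLine.mem_KBm {β : ℝ} (hβ : 0 < β) (hn₁ : |n₁| ≤ (m : ℤ)) (hn₂ : |n₂| ≤ (m : ℤ))
    (hn₃ : |n₃| ≤ (m : ℤ)) (hx : OnCantorLine (rB β) (tr n₁ n₂ n₃) i x) : x ∈ KBm β m := by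
  obtain ⟨c₀, hc₀⟩ : (cantorTypeSet1 (rB β)).Nonempty := by
    rw [rB_eq_pow]; exact cantorTypeSet1_nonempty (rB_one_pos β) (rB_one_lt_half hβ)
  refine ⟨n₁, n₂, n₃, hn₁, hn₂, hn₃,
    WithLp.toLp 2 fun j => if j = i then c₀ else x j - tr n₁ n₂ n₃ j, i,
    x i - tr n₁ n₂ n₃ i - c₀, fun j => ?_, ?_⟩
  · by_cases hj : j = i
    · simpa [hj] using hc₀
    · simpa [hj] using hx j hj
  · ext j
    by_cases hj : j = i
    · subst hj
      simp only [PiLp.add_apply, ↓reduceIte, PiLp.smul_apply, PiLp.single_eq_same, smul_eq_mul,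
        mul_one]
      ring
    · simp [hj]

lemma OnCantorLine.abs_apply_le {q b₁ b₄ : ℝ} (hq : q ≤ 1/2) (hn₁ : |n₁| ≤ (m : ℤ))
    (hn₂ : |n₂| ≤ (m : ℤ)) (hn₃ : |n₃| ≤ (m : ℤ)) (hb₁ : 2 * m + 1 ≤ b₁) (hb₄ : 1 ≤ b₄)
    (hx : OnCantorLine (q ^ ·) (tr n₁ n₂ n₃) i x) (hxi : |x i| ≤ ![b₁, b₁, b₁, b₄] i)
    (j : Fin 4) : |x j| ≤ ![b₁, b₁, b₁, b₄] j := by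
  by_cases hj : j = i
  · rwa [hj]
  have hc := abs_le_one_of_mem_cantorTypeSet1 hq (hx j hj)
  have ht := abs_tr_apply_le hn₁ hn₂ hn₃ j
  have hxj : |x j| ≤ 1 + ![2 * (m : ℝ), 2 * (m : ℝ), 2 * (m : ℝ), 0] j := by
    linarith [abs_sub_abs_le_abs_sub (x j) (tr n₁ n₂ n₃ j)]
  fin_cases j <;>
    simp only [Fin.isValue, Fin.zero_eta, Fin.mk_one, Fin.reduceFinMk, Matrix.cons_val,
      Matrix.cons_val_zero, Matrix.cons_val_one, add_zero] at hxj ⊢ <;>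
    linarith

end KBm

lemma nearLines_iff {β : ℝ} {m k : ℕ} {b₁ b₄ : ℝ} {x : E4} :
    nearLines β m k b₁ b₄ x ↔
      ∃ n₁ n₂ n₃ : ℤ, |n₁| ≤ (m : ℤ) ∧ |n₂| ≤ (m : ℤ) ∧ |n₃| ≤ (m : ℤ) ∧
        ∃ i, |x i| ≤ ![b₁, b₁, b₁, b₄] i ∧
          ∀ j ≠ i, x j - tr n₁ n₂ n₃ j ∈ cantorU1 (rB β) k := by
  refine exists₃_congr fun n₁ n₂ n₃ => and_congr_right' <| and_congr_right' <|
    and_congr_right' ?_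
  simp only [Fin.isValue, ne_eq, tr_apply, Fin.forall_fin_succ, Fin.exists_fin_succ,
    Matrix.cons_val_zero, Matrix.cons_val_succ, Fin.succ_zero_eq_one, Fin.succ_one_eq_two,
    Matrix.cons_val_fin_one, sub_zero, Fin.reduceSucc, IsEmpty.forall_iff, IsEmpty.exists_iff,
    and_true, true_and, or_false, not_true_eq_false, not_false_eq_true, forall_const,
    one_ne_zero, zero_ne_one, Fin.reduceEq]
  tauto

lemma abs_apply_le_abs_add_dist {ι : Type*} [Fintype ι] (x z : EuclideanSpace ℝ ι) (i : ι) :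
    |x i| ≤ |z i| + dist x z := by
  have := PiLp.dist_apply_le x z i
  rw [Real.dist_eq] at this
  linarith [abs_sub_abs_le_abs_sub (x i) (z i)]

lemma exists_onCantorLine_dist_le_of_eq_reflect {β L : ℝ} (hβ : 0 < β) (hL : 0 < L) {m k : ℕ}
    {F : E4 → E4} (hF : ∀ x ∈ Rbox m 13, ∀ y ∈ Rbox m 13, L⁻¹ * dist x y ≤ dist (F x) (F y))
    (hFK : ∀ x ∈ KBm β m,
      |x 0| ≤ 2 * (m : ℝ) + 3 → |x 1| ≤ 2 * (m : ℝ) + 3 → |x 2| ≤ 2 * (m : ℝ) + 3 →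
      |x 3| ≤ 3 → F x = reflect x)
    {x : E4} (hx : x ∈ Rbox m 13) {n₁ n₂ n₃ : ℤ} (hn₁ : |n₁| ≤ (m : ℤ)) (hn₂ : |n₂| ≤ (m : ℤ))
    (hn₃ : |n₃| ≤ (m : ℤ)) {i : Fin 4}
    (hFxi : |F x i| ≤ ![2 * (m : ℝ) + 2, 2 * (m : ℝ) + 2, 2 * (m : ℝ) + 2, 2] i)
    (hFx : ∀ j ≠ i, F x j - tr n₁ n₂ n₃ j ∈ cantorU1 (rB β) k) :
    ∃ z, OnCantorLine (rB β) (tr n₁ n₂ n₃) i z ∧ |z i| = |F x i| ∧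
      dist x z ≤ 4 * L * rB β k := by
  have hq₀ := rB_one_pos β
  have hq := rB_one_lt_half hβ
  rw [rB_eq_pow] at hFx ⊢
  obtain ⟨w, hw, hwi, hFxw⟩ := exists_onCantorLine_dist_le hq₀ hq hFx
  have hwb := hw.abs_apply_le hq.le hn₁ hn₂ hn₃ (by linarith) one_le_two (hwi ▸ hFxi)
  have hz := hw.reflect (by simp [tr_apply])
  have hK : reflect w ∈ KBm β m := OnCantorLine.mem_KBm hβ hn₁ hn₂ hn₃ (by rw [rB_eq_pow]; exact hz)
  have hzb : ∀ j, |reflect w j| ≤ ![2 * (m : ℝ) + 2, 2 * (m : ℝ) + 2, 2 * (m : ℝ) + 2, 2] j :=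
    fun j => (abs_reflect_apply w j).trans_le (hwb j)
  have h₀ := hzb 0; have h₁ := hzb 1; have h₂ := hzb 2; have h₃ := hzb 3
  simp only [Matrix.cons_val] at h₀ h₁ h₂ h₃
  have hFz : F (reflect w) = w := by
    rw [hFK _ hK (by linarith) (by linarith) (by linarith) (by linarith), reflect_reflect]
  have hzR : reflect w ∈ Rbox m 13 := ⟨by linarith, by linarith, by linarith, by linarith⟩
  refine ⟨reflect w, hz, by rw [abs_reflect_apply, hwi], ?_⟩
  calc dist x (reflect w) ≤ L * dist (F x) (F (reflect w)) := (inv_mul_le_iff₀ hL).1 (hF x hx _ hzR)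
    _ ≤ L * (√(Fintype.card (Fin 4)) * (2 * rB β 1 ^ k)) := by rw [hFz]; gcongr
    _ = 4 * L * rB β 1 ^ k := by rw [Fintype.card_fin]; norm_num; ring

/-- Lemma 4.5: there is `M` (depending only on `L` and `β`) such that any
`L`-bi-Lipschitz homeomorphism `F̂` of `R_{m,13}` onto itself which equals the
reflection on `K_{B,m} ∩ ([-2m-3,2m+3]³ × [-3,3])` maps the good set `𝒢` off the
bad set `𝒯`. -/
theorem image_avoids_bad_set
    (β L : ℝ) (hβ : 2 < β) (hL : 1 ≤ L) :
    ∃ M : ℕ, ∀ (m : ℕ) (Fh : E4 → E4),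
      Set.BijOn Fh (Rbox m 13) (Rbox m 13) →
      (∀ x ∈ Rbox m 13, ∀ y ∈ Rbox m 13,
        L⁻¹ * dist x y ≤ dist (Fh x) (Fh y) ∧ dist (Fh x) (Fh y) ≤ L * dist x y) →
      (∀ x ∈ KBm β m,
        |x 0| ≤ 2 * (m : ℝ) + 3 → |x 1| ≤ 2 * (m : ℝ) + 3 → |x 2| ≤ 2 * (m : ℝ) + 3 →
        |x 3| ≤ 3 → Fh x = reflect x) →
      ∀ x ∈ Rbox m 13, ¬ nearLines β m 1 (2 * (m : ℝ) + 3) 3 x →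
        ¬ nearLines β m (M + 1) (2 * (m : ℝ) + 2) 2 (Fh x) := by
  set q := rB β 1
  have hq₀ : 0 < q := rB_one_pos β
  have hq : q ≤ 1/4 := rB_one_le_quarter (by linarith)
  obtain ⟨M, hM⟩ := exists_pow_lt_of_lt_one (inv_pos.2 (by positivity : 0 < 16 * L))
    (by linarith : q < 1)
  have hLqM : 16 * L * q ^ M < 1 := by
    have := mul_lt_mul_of_pos_left hM (by positivity : 0 < 16 * L)
    rwa [mul_inv_cancel₀ (by positivity)] at this
  refine ⟨M, fun m Fh _ hF hFK x hx hx𝒢 hFx => hx𝒢 ?_⟩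
  rw [nearLines_iff] at hFx ⊢
  obtain ⟨n₁, n₂, n₃, hn₁, hn₂, hn₃, i, hFxi, hFx⟩ := hFx
  obtain ⟨z, hz, hzi, hxz⟩ := exists_onCantorLine_dist_le_of_eq_reflect (by linarith)
    (by linarith) (fun x hx y hy => (hF x hx y hy).1) hFK hx hn₁ hn₂ hn₃ hFxi hFx
  have hxz' : dist x z ≤ q / 4 := by
    refine hxz.trans ?_
    rw [congrFun (rB_eq_pow β), pow_succ]
    nlinarith
  have hxi := abs_apply_le_abs_add_dist x z i
  refine ⟨n₁, n₂, n₃, hn₁, hn₂, hn₃, i, ?_, ?_⟩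
  · fin_cases i <;>
      simp only [Fin.isValue, Fin.zero_eta, Fin.mk_one, Fin.reduceFinMk, Matrix.cons_val,
        Matrix.cons_val_zero, Matrix.cons_val_one] at hFxi hzi hxi ⊢ <;>
      linarith
  · rw [rB_eq_pow] at hz ⊢
    exact hz.sub_mem_cantorU1_one hq₀.le hq hxz'
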